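/- The free applicative functor on a × (b → −): for fixed sets a and b, the functor S*(c) = Σ_{n∈ℕ} aⁿ × (bⁿ → c) carries a lax monoidal structure (for the cartesian monoidal structure on Set) such that for every applicative functor F, monoidal natural transformations S* ⟶ F are in natural bijection with ordinary natural transformations from the functor S(c) = a × (b → c) to F; that is, App(S*, F) ≅ [Set, Set](S, F) naturally in F. -/

import Mathlib

/-!
The free applicative functor on `S(c) = a × (b → c)`: the functor
`S*(c) = Σₙ aⁿ × (bⁿ → c)` carries a lax monoidal structure (for the cartesian monoidal
structure on `Set`) such that for every applicative functor `F`, monoidal natural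
transformations `S* ⟶ F` are in bijection with ordinary natural transformations
`S ⟶ F`, naturally in `F`.
-/

open CategoryTheory

/-- An applicative functor: a lax monoidal endofunctor of `(Set, ×)`. -/
structure AppFunctor where
  /-- the underlying endofunctor of `Set` -/
  F : Type ⥤ Type
  /-- the unit `1 ⟶ F 1` of the lax monoidal structure -/
  unit : Unit → F.obj Unit
  /-- the multiplication (tensorator) `F X × F Y ⟶ F (X × Y)` -/
  mult : ∀ X Y : Type, F.obj X × F.obj Y → F.obj (X × Y)
  mult_natural : ∀ {X X' Y Y' : Type} (f : X → X') (g : Y → Y') (x : F.obj X) (y : F.obj Y),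
    F.map (TypeCat.ofHom (Prod.map f g)) (mult X Y (x, y)) =
      mult X' Y' (F.map (TypeCat.ofHom f) x, F.map (TypeCat.ofHom g) y)
  mult_assoc : ∀ (X Y Z : Type) (x : F.obj X) (y : F.obj Y) (z : F.obj Z),
    F.map (TypeCat.ofHom (fun p : (X × Y) × Z => (p.1.1, (p.1.2, p.2))))
        (mult (X × Y) Z (mult X Y (x, y), z)) = mult X (Y × Z) (x, mult Y Z (y, z))
  left_unit : ∀ (X : Type) (x : F.obj X),
    F.map (TypeCat.ofHom Prod.snd) (mult Unit X (unit Unit.unit, x)) = x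
  right_unit : ∀ (X : Type) (x : F.obj X),
    F.map (TypeCat.ofHom Prod.fst) (mult X Unit (x, unit Unit.unit)) = x

/-- A morphism of applicative functors: a monoidal natural transformation. -/
structure AppHom (P Q : AppFunctor) where
  /-- the underlying natural transformation -/
  η : P.F ⟶ Q.F
  unit_comm : ∀ u : Unit, η.app Unit (P.unit u) = Q.unit u
  mult_comm : ∀ (X Y : Type) (x : P.F.obj X) (y : P.F.obj Y),
    η.app (X × Y) (P.mult X Y (x, y)) = Q.mult X Y (η.app X x, η.app Y y)

/-- Composition of morphisms of applicative functors. -/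
def AppHom.comp {P Q R : AppFunctor} (φ : AppHom P Q) (ψ : AppHom Q R) : AppHom P R where
  η := φ.η ≫ ψ.η
  unit_comm := by intro u; simp [φ.unit_comm, ψ.unit_comm]
  mult_comm := by intro X Y x y; simp [φ.mult_comm, ψ.mult_comm]

/-- The functor `S(c) = a × (b → c)`. -/
def SFun (a b : Type) : Type ⥤ Type where
  obj c := a × (b → c)
  map f := TypeCat.ofHom (fun x => (x.1, f ∘ x.2))

/-- The functor `S*(c) = Σₙ aⁿ × (bⁿ → c)`. -/
def SStar (a b : Type) : Type ⥤ Type where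
  obj c := Σ n : ℕ, (Fin n → a) × ((Fin n → b) → c)
  map f := TypeCat.ofHom (fun x => ⟨x.1, x.2.1, f ∘ x.2.2⟩)
/-!
Multiplication on `S*` concatenates the tuples in `aⁿ` and splits the argument in `bⁿ`
between the two factors. Then every element `⟨n, as, f⟩` of `S*(c)` is the image under `f` of
the `n`-fold product of the generators `of (as i, id)`, where `of : S ⟶ S*` includes the
one-element tuples; so a monoidal transformation out of `S*` is determined by its restriction
along `of`. Conversely a natural `θ : S ⟶ F` extends to `S*` by sending `⟨n, as, f⟩` to `F f`
applied to the `n`-fold product in `F` of the `θ(as i, id)`.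
-/

open TypeCat

theorem CategoryTheory.Functor.map_ofHom_map_ofHom (G : Type ⥤ Type) {X Y Z : Type}
    (f : X → Y) (g : Y → Z) (x : G.obj X) :
    G.map (ofHom g) (G.map (ofHom f) x) = G.map (ofHom (g ∘ f)) x :=
  (G.map_comp_apply (ofHom f) (ofHom g) x).symm

theorem CategoryTheory.Functor.map_ofHom_id (G : Type ⥤ Type) {X : Type} (x : G.obj X) :
    G.map (ofHom id) x = x :=
  G.map_id_apply X x

theorem CategoryTheory.Functor.map_ofHom_congr (G : Type ⥤ Type) {X Y : Type} {f g : X → Y}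
    (h : ∀ x, f x = g x) (x : G.obj X) : G.map (ofHom f) x = G.map (ofHom g) x := by
  rw [funext h]

theorem AppHom.ext {P Q : AppFunctor} {φ ψ : AppHom P Q} (h : φ.η = ψ.η) : φ = ψ := by
  cases φ; cases ψ; cases h; rfl

namespace AppFunctor

variable (F : AppFunctor)

theorem mult_map_left {X X' Y : Type} (f : X → X') (x : F.F.obj X) (y : F.F.obj Y) :
    F.mult X' Y (F.F.map (ofHom f) x, y) = F.F.map (ofHom (Prod.map f id)) (F.mult X Y (x, y)) := by
  rw [F.mult_natural f id x y, F.F.map_ofHom_id]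

theorem mult_map_right {X Y Y' : Type} (g : Y → Y') (x : F.F.obj X) (y : F.F.obj Y) :
    F.mult X Y' (x, F.F.map (ofHom g) y) = F.F.map (ofHom (Prod.map id g)) (F.mult X Y (x, y)) := by
  rw [F.mult_natural id g x y, F.F.map_ofHom_id]

def sequence (b : Type) : ∀ n : ℕ, (Fin n → F.F.obj b) → F.F.obj (Fin n → b)
  | 0, _ => F.F.map (ofHom fun _ => Fin.elim0) (F.unit ())
  | n + 1, v => F.F.map (ofHom fun p : (Fin n → b) × b => Fin.snoc p.1 p.2)
      (F.mult _ _ (sequence b n fun i => v i.castSucc, v (Fin.last n)))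

theorem sequence_snoc {b : Type} {n : ℕ} (v : Fin n → F.F.obj b) (x : F.F.obj b) :
    F.sequence b (n + 1) (Fin.snoc v x) =
      F.F.map (ofHom fun p : (Fin n → b) × b => Fin.snoc p.1 p.2)
        (F.mult _ _ (F.sequence b n v, x)) := by
  simp only [sequence, Fin.snoc_castSucc, Fin.snoc_last]

theorem sequence_one {b : Type} (v : Fin 1 → F.F.obj b) :
    F.sequence b 1 v = F.F.map (ofHom fun y _ => y) (v 0) := by
  conv_rhs => rw [← F.left_unit _ (v 0), Functor.map_ofHom_map_ofHom]
  rw [sequence, sequence, mult_map_left, Functor.map_ofHom_map_ofHom]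
  refine F.F.map_ofHom_congr (fun p => funext fun i => ?_) _
  rw [Fin.fin_one_eq_zero i]
  rfl

theorem sequence_append {b : Type} {n m : ℕ} (v : Fin n → F.F.obj b) (w : Fin m → F.F.obj b) :
    F.sequence b (n + m) (Fin.append v w) =
      F.F.map (ofHom fun p : (Fin n → b) × (Fin m → b) => Fin.append p.1 p.2)
        (F.mult _ _ (F.sequence b n v, F.sequence b m w)) := by
  induction m with
  | zero =>
    obtain rfl : w = Fin.elim0 := Subsingleton.elim _ _
    rw [Fin.append_elim0]
    change F.sequence b n v = _
    conv_lhs => rw [← F.right_unit _ (F.sequence b n v)]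
    rw [sequence, mult_map_right, Functor.map_ofHom_map_ofHom]
    refine F.F.map_ofHom_congr (fun p => ?_) _
    simp
  | succ m ih =>
    rw [← Fin.snoc_init_self w, Fin.append_snoc]
    refine (F.sequence_snoc (n := n + m) _ _).trans ?_
    rw [sequence_snoc, ih, mult_map_left, mult_map_right, Functor.map_ofHom_map_ofHom,
      Functor.map_ofHom_map_ofHom, ← F.mult_assoc, Functor.map_ofHom_map_ofHom]
    exact F.F.map_ofHom_congr (fun p => (Fin.append_snoc _ _ _).symm) _

end AppFunctor

theorem AppHom.app_sequence {P Q : AppFunctor} (φ : AppHom P Q) {b : Type} {n : ℕ}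
    (v : Fin n → P.F.obj b) :
    φ.η.app (Fin n → b) (P.sequence b n v) = Q.sequence b n (fun i => φ.η.app b (v i)) := by
  induction n with
  | zero =>
    rw [AppFunctor.sequence, NatTrans.naturality_apply, φ.unit_comm]
    rfl
  | succ n ih =>
    rw [AppFunctor.sequence, NatTrans.naturality_apply, φ.mult_comm, ih]
    rfl

/-- `S` is the coproduct over `a` of the representables `b → -`, and this is the universal
element of the summand at `x`. -/
def SFun.generic {a b : Type} (x : a) : (SFun a b).obj b := (x, id)

namespace SStar

variable {a b : Type}

theorem mk_eq_mk {c : Type} {n m : ℕ} (h : n = m)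
    (as : Fin n → a) (f : (Fin n → b) → c) (as' : Fin m → a) (g : (Fin m → b) → c)
    (has : as = as' ∘ Fin.cast h) (hf : ∀ bs : Fin m → b, f (bs ∘ Fin.cast h) = g bs) :
    (⟨n, as, f⟩ : (SStar a b).obj c) = ⟨m, as', g⟩ := by
  subst h
  obtain rfl : as = as' := has
  obtain rfl : f = g := funext hf
  rfl

def appFunctor (a b : Type) : AppFunctor where
  F := SStar a b
  unit _ := ⟨0, Fin.elim0, fun _ => ()⟩
  mult _ _ p := ⟨p.1.1 + p.2.1, Fin.append p.1.2.1 p.2.2.1,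
    fun bs => (p.1.2.2 (bs ∘ Fin.castAdd p.2.1), p.2.2.2 (bs ∘ Fin.natAdd p.1.1))⟩
  mult_natural _ _ _ _ := rfl
  mult_assoc _ _ _ x y z := by
    obtain ⟨n, as, f⟩ := x
    obtain ⟨m, as', g⟩ := y
    obtain ⟨k, as'', h⟩ := z
    refine mk_eq_mk (Nat.add_assoc n m k) _ _ _ _ (Fin.append_assoc as as' as'') fun bs => ?_
    refine congrArg₂ Prod.mk (congrArg f ?_)
      (congrArg₂ Prod.mk (congrArg g ?_) (congrArg h ?_)) <;>
    · funext i
      exact congrArg bs (Fin.ext (by simp [Nat.add_assoc]))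
  left_unit _ x := by
    obtain ⟨n, as, f⟩ := x
    refine mk_eq_mk (Nat.zero_add n) _ _ _ _ (Fin.elim0_append as) fun bs => congrArg f ?_
    funext i
    exact congrArg bs (by ext; simp)
  right_unit _ x := by
    obtain ⟨n, as, f⟩ := x
    refine mk_eq_mk (Nat.add_zero n) _ _ _ _ (Fin.append_elim0 as) fun bs => congrArg f ?_
    funext i
    exact congrArg bs (by ext; simp)

def of (a b : Type) : SFun a b ⟶ (appFunctor a b).F where
  app _ := ofHom fun x => ⟨1, fun _ => x.1, fun bs => x.2 (bs 0)⟩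

theorem sequence_of_generic {n : ℕ} (as : Fin n → a) :
    (appFunctor a b).sequence b n (fun i => (of a b).app b (SFun.generic (as i))) =
      ⟨n, as, id⟩ := by
  induction n with
  | zero =>
    change (⟨0, Fin.elim0, _⟩ : (SStar a b).obj (Fin 0 → b)) = _
    congr 1
    exact Prod.ext (Subsingleton.elim _ _) (Subsingleton.elim _ _)
  | succ n ih =>
    rw [AppFunctor.sequence, ih]
    refine Sigma.ext rfl (heq_of_eq (Prod.ext ?_ (funext fun bs => Fin.snoc_init_self bs)))
    exact (Fin.append_right_eq_snoc _ _).trans (Fin.snoc_init_self as)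

def lift (F : AppFunctor) (θ : SFun a b ⟶ F.F) : AppHom (appFunctor a b) F where
  η :=
    { app _ := ofHom fun x =>
        F.F.map (ofHom x.2.2) (F.sequence b x.1 fun i => θ.app b (SFun.generic (x.2.1 i)))
      naturality _ _ f := by
        ext x
        exact (F.F.map_ofHom_map_ofHom x.2.2 f _).symm }
  unit_comm _ := by
    change F.F.map (ofHom fun _ => ()) (F.F.map (ofHom fun _ => Fin.elim0) (F.unit ())) = F.unit ()
    rw [Functor.map_ofHom_map_ofHom, Subsingleton.elim (_ ∘ _) id, F.F.map_ofHom_id]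
  mult_comm X Y x y := by
    obtain ⟨n, as, f⟩ := x
    obtain ⟨m, as', g⟩ := y
    change F.F.map (ofHom fun bs => (f (bs ∘ Fin.castAdd m), g (bs ∘ Fin.natAdd n)))
      (F.sequence b (n + m) fun i => θ.app b (SFun.generic (Fin.append as as' i))) =
      F.mult X Y (F.F.map (ofHom f) (F.sequence b n fun i => θ.app b (SFun.generic (as i))),
        F.F.map (ofHom g) (F.sequence b m fun j => θ.app b (SFun.generic (as' j))))
    have happend : (fun i => θ.app b (SFun.generic (Fin.append as as' i))) =
        Fin.append (fun i => θ.app b (SFun.generic (as i)))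
          (fun j => θ.app b (SFun.generic (as' j))) := by
      funext i
      refine Fin.addCases (fun i => ?_) (fun j => ?_) i <;> simp
    rw [happend, F.sequence_append, Functor.map_ofHom_map_ofHom, ← F.mult_natural f g]
    exact F.F.map_ofHom_congr (fun p => congrArg₂ Prod.mk
      (congrArg f (funext (Fin.append_left _ _))) (congrArg g (funext (Fin.append_right _ _)))) _

theorem of_comp_lift (F : AppFunctor) (θ : SFun a b ⟶ F.F) : of a b ≫ (lift F θ).η = θ := by
  ext c ⟨x, k⟩
  change F.F.map (ofHom fun bs : Fin 1 → b => k (bs 0))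
    (F.sequence b 1 fun _ => θ.app b (SFun.generic x)) = θ.app c (x, k)
  rw [F.sequence_one, Functor.map_ofHom_map_ofHom, ← NatTrans.naturality_apply]
  rfl

theorem lift_of_comp {F : AppFunctor} (φ : AppHom (appFunctor a b) F) :
    lift F (of a b ≫ φ.η) = φ := by
  refine AppHom.ext (NatTrans.ext (funext fun c => ?_))
  ext ⟨n, as, f⟩
  change F.F.map (ofHom f) (F.sequence b n fun i => φ.η.app b ((of a b).app b
    (SFun.generic (as i)))) = φ.η.app c ⟨n, as, f⟩
  rw [← φ.app_sequence, sequence_of_generic]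
  exact (NatTrans.naturality_apply φ.η (ofHom f) _).symm

end SStar

/-- The free applicative functor on `S(c) = a × (b → c)`: the functor
`S*(c) = Σₙ aⁿ × (bⁿ → c)` carries a lax monoidal structure such that morphisms of
applicative functors `S* ⟶ F` correspond bijectively, and naturally in `F`, to natural
transformations `S ⟶ F`. -/
theorem sstar_is_free_applicative (a b : Type) :
    ∃ L : AppFunctor, L.F = SStar a b ∧
      ∃ e : ∀ F : AppFunctor, AppHom L F ≃ (SFun a b ⟶ F.F),
        ∀ (F F' : AppFunctor) (ψ : AppHom F F') (φ : AppHom L F),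
          e F' (φ.comp ψ) = e F φ ≫ ψ.η :=
  ⟨SStar.appFunctor a b, rfl,
    fun F => ⟨fun φ => SStar.of a b ≫ φ.η, SStar.lift F, SStar.lift_of_comp,
      SStar.of_comp_lift F⟩,
    fun _ _ _ _ => rfl⟩
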